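/- Let n ≥ 1. Let H^{11} ∈ M_n(ℝ) be symmetric positive definite with nonpositive off-diagonal entries, let H^{12} ∈ M_{n,2}(ℝ) have only nonpositive entries, and let H̄^{12} := H^{12}·(1,1)ᵀ ∈ M_{n,1}(ℝ). Let H ∈ M_{n+2}(ℝ) and H̄ ∈ M_{n+1}(ℝ) be symmetric positive definite matrices with nonpositive off-diagonal entries admitting the block decompositions H = [[H^{11}, H^{12}],[(H^{12})ᵀ, H^{22}]] and H̄ = [[H^{11}, H̄^{12}],[(H̄^{12})ᵀ, H̄^{22}]]. Let G := H^{-1} and Ḡ := H̄^{-1}, let G^{22} ∈ M_2(ℝ) be the lower-right 2×2 block of G and Ḡ^{22} ∈ ℝ the lower-right entry of Ḡ. Set M := −(H^{12})ᵀ(H^{11})^{-1} ∈ M_{2,n}(ℝ). For X ∈ ℝ^{n+2} write X^{(1)} ∈ ℝ^n for its first n coordinates and X^{(2)} ∈ ℝ² for its last two coordinates, define α(X) := M X^{(1)} + X^{(2)} ∈ ℝ², and let X̄ ∈ ℝ^{n+1} be given by X̄_i = X_i for i ≤ n and X̄_{n+1} = X_{n+1} + X_{n+2}. Then for any X¹,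 X² ∈ [0,∞)^{n+2}: the entries of α(X¹) and α(X²) are nonnegative, the number C := (X^{1,(1)})ᵀ(H^{11})^{-1}X^{2,(1)} is nonnegative, and one has (X¹)ᵀ G X² = C + α(X¹)ᵀ G^{22} α(X²) and (X̄¹)ᵀ Ḡ X̄² = C + (α(X¹)₁ + α(X¹)₂) · Ḡ^{22} · (α(X²)₁ + α(X²)₂). -/

import Mathlib

/-!
Block Gaussian elimination: if `S = H²² - (H¹²)ᵀ (H¹¹)⁻¹ H¹²` is the Schur complement, then
`(x₁, y₁)ᵀ H⁻¹ (x₂, y₂) = x₁ᵀ (H¹¹)⁻¹ x₂ + (M x₁ + y₁)ᵀ S⁻¹ (M x₂ + y₂)`, and `S⁻¹` is the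
lower-right block of `H⁻¹`. For `H̄` the off-diagonal block is `H¹² (1, 1)ᵀ`, so the vector
playing the role of `α` is `α₁ + α₂`. Nonnegativity comes from `H¹¹` being a positive definite
matrix with nonpositive off-diagonal entries, hence inverse-nonnegative; together with
`H¹² ≤ 0` this makes `M ≥ 0`.
-/

open Matrix

namespace Matrix

variable {m p q ι R : Type*} [Fintype m]

lemma dotProduct_mulVec_nonpos_of_offDiag_nonpos [CommSemiring R] [PartialOrder R]
    [IsOrderedRing R] {A : Matrix m m R} (hA : ∀ i j, i ≠ j → A i j ≤ 0) {u v : m → R}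
    (hu : 0 ≤ u) (hv : 0 ≤ v) (huv : ∀ i, u i * v i = 0) : u ⬝ᵥ (A *ᵥ v) ≤ 0 := by
  simp only [dotProduct, mulVec, Finset.mul_sum]
  refine Finset.sum_nonpos fun i _ => Finset.sum_nonpos fun k _ => ?_
  obtain rfl | hik := eq_or_ne i k
  · rw [mul_left_comm, huv, mul_zero]
  · exact mul_nonpos_of_nonneg_of_nonpos (hu i)
      (mul_nonpos_of_nonpos_of_nonneg (hA i k hik) (hv k))

lemma PosDef.nonneg_of_mulVec_nonneg {A : Matrix m m ℝ} (hA : A.PosDef)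
    (hoff : ∀ i j, i ≠ j → A i j ≤ 0) {x : m → ℝ} (hx : 0 ≤ A *ᵥ x) : 0 ≤ x := by
  have hsupp : ∀ i, x⁻ i * x⁺ i = 0 := fun i => by
    rcases le_total (x i) 0 with h | h
    · simp [posPart_eq_zero.2 h]
    · simp [negPart_eq_zero.2 h]
  -- `x⁻` and `x⁺` have disjoint supports, so the cross term only sees off-diagonal entries.
  have hdecomp : x⁺ - x = x⁻ := by linear_combination posPart_sub_negPart x
  have hquad : x⁻ ⬝ᵥ (A *ᵥ x⁻) ≤ 0 := calc
    x⁻ ⬝ᵥ (A *ᵥ x⁻) = x⁻ ⬝ᵥ (A *ᵥ x⁺) - x⁻ ⬝ᵥ (A *ᵥ x) := by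
      rw [← dotProduct_sub, ← mulVec_sub, hdecomp]
    _ ≤ 0 := sub_nonpos_of_le <|
      (dotProduct_mulVec_nonpos_of_offDiag_nonpos hoff (negPart_nonneg x) (posPart_nonneg x)
        hsupp).trans (dotProduct_nonneg_of_nonneg (negPart_nonneg x) hx)
  have hneg : x⁻ = 0 := by
    by_contra hne
    have := hA.dotProduct_mulVec_pos hne
    rw [star_trivial] at this
    linarith
  exact negPart_eq_zero.1 hneg

lemma PosDef.inv_apply_nonneg [DecidableEq m] {A : Matrix m m ℝ} (hA : A.PosDef)
    (hoff : ∀ i j, i ≠ j → A i j ≤ 0) (i j : m) : 0 ≤ A⁻¹ i j := by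
  have hcol : A *ᵥ (A⁻¹ *ᵥ Pi.single j 1) = Pi.single j 1 := by
    rw [mulVec_mulVec, mul_nonsing_inv A hA.det_pos.ne'.isUnit, one_mulVec]
  have := hA.nonneg_of_mulVec_nonneg hoff (hcol ▸ Pi.single_nonneg.2 zero_le_one) i
  simpa [mulVec_single_one] using this

lemma neg_transpose_mul_mulVec_add_nonneg [Fintype p] [Fintype q] [Ring R] [PartialOrder R]
    [IsOrderedRing R] {B : Matrix m p R} {K : Matrix m q R} (hB : ∀ i j, B i j ≤ 0)
    (hK : ∀ i j, 0 ≤ K i j) {x : q → R} {y : p → R} (hx : 0 ≤ x) (hy : 0 ≤ y) :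
    0 ≤ -(Bᵀ * K) *ᵥ x + y := by
  have hBK : ∀ a k, 0 ≤ (-(Bᵀ * K)) a k := fun a k => neg_nonneg.2 <|
    Finset.sum_nonpos fun j _ => mul_nonpos_of_nonpos_of_nonneg (hB j a) (hK j k)
  exact fun a => add_nonneg (dotProduct_nonneg_of_nonneg (hBK a) hx) (hy a)

lemma neg_transpose_mul_mulVec_add_sum_cols [Fintype q] [Ring R] (B : Matrix m (Fin 2) R)
    (K : Matrix m q R) (x : q → R) (y : Fin 2 → R) :
    -((of fun i (_ : Fin 1) => B i 0 + B i 1)ᵀ * K) *ᵥ x + (fun _ => y 0 + y 1) =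
      fun _ => (-(Bᵀ * K) *ᵥ x + y) 0 + (-(Bᵀ * K) *ᵥ x + y) 1 := by
  ext
  simp only [Pi.add_apply, neg_mulVec, Pi.neg_apply, mulVec, dotProduct, mul_apply,
    transpose_apply, of_apply, add_mul, Finset.sum_add_distrib]
  abel

lemma const_dotProduct_mulVec_const [Semiring R] (S : Matrix (Fin 1) (Fin 1) R) (a b : R) :
    (fun _ => a) ⬝ᵥ (S *ᵥ fun _ => b) = a * S 0 0 * b := by
  simp [dotProduct, mulVec, mul_assoc]

lemma dotProduct_reindex_mulVec [NonUnitalNonAssocSemiring R] {n : Type*} [Fintype n] (e : m ≃ n)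
    (N : Matrix m m R) (v w : n → R) :
    v ⬝ᵥ (reindex e e N *ᵥ w) = (v ∘ e) ⬝ᵥ (N *ᵥ (w ∘ e)) := by
  rw [reindex_apply, submatrix_mulVec_equiv, Equiv.symm_symm, dotProduct_comp_equiv_symm]

section Schur

variable [Fintype p] [DecidableEq m] [DecidableEq p] [CommRing R]

lemma isUnit_det_schur_of_isUnit_det_fromBlocks {A : Matrix m m R} {B : Matrix m p R}
    {C : Matrix p m R} {D : Matrix p p R} (hA : IsUnit A.det)
    (hN : IsUnit (fromBlocks A B C D).det) : IsUnit (D - C * A⁻¹ * B).det := by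
  let := invertibleOfIsUnitDet A hA
  rw [det_fromBlocks₁₁, invOf_eq_nonsing_inv] at hN
  exact isUnit_of_mul_isUnit_right hN

lemma inv_fromBlocks_of_isUnit_det_schur (A : Matrix m m R) (B : Matrix m p R)
    (C : Matrix p m R) (D : Matrix p p R) (hA : IsUnit A.det)
    (hS : IsUnit (D - C * A⁻¹ * B).det) :
    (fromBlocks A B C D)⁻¹ =
      fromBlocks (A⁻¹ + A⁻¹ * B * (D - C * A⁻¹ * B)⁻¹ * C * A⁻¹)
        (-(A⁻¹ * B * (D - C * A⁻¹ * B)⁻¹)) (-((D - C * A⁻¹ * B)⁻¹ * C * A⁻¹))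
        (D - C * A⁻¹ * B)⁻¹ := by
  let := invertibleOfIsUnitDet A hA
  let : Invertible (D - C * ⅟A * B) := by
    rw [invOf_eq_nonsing_inv]; exact invertibleOfIsUnitDet _ hS
  let := fromBlocks₁₁Invertible A B C D
  rw [← invOf_eq_nonsing_inv, invOf_fromBlocks₁₁_eq]
  simp only [invOf_eq_nonsing_inv]

variable {A : Matrix m m R} {B : Matrix m p R} {D : Matrix p p R}

lemma sumElim_dotProduct_inv_fromBlocks_mulVec_sumElim (hAsymm : A.IsSymm) (hA : IsUnit A.det)
    (hS : IsUnit (D - Bᵀ * A⁻¹ * B).det) (x₁ x₂ : m → R) (y₁ y₂ : p → R) :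
    Sum.elim x₁ y₁ ⬝ᵥ ((fromBlocks A B Bᵀ D)⁻¹ *ᵥ Sum.elim x₂ y₂) =
      x₁ ⬝ᵥ (A⁻¹ *ᵥ x₂) +
        (-(Bᵀ * A⁻¹) *ᵥ x₁ + y₁) ⬝ᵥ ((D - Bᵀ * A⁻¹ * B)⁻¹ *ᵥ (-(Bᵀ * A⁻¹) *ᵥ x₂ + y₂)) := by
  have hAinv : A⁻¹ᵀ = A⁻¹ := by rw [transpose_nonsing_inv, hAsymm.eq]
  have hmove : ∀ (v : m → R) (w : p → R),
      ((Bᵀ * A⁻¹) *ᵥ v) ⬝ᵥ w = v ⬝ᵥ ((A⁻¹ * B) *ᵥ w) := fun v w => by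
    rw [dotProduct_mulVec, ← vecMul_transpose, transpose_mul, transpose_transpose, hAinv]
  rw [inv_fromBlocks_of_isUnit_det_schur A B Bᵀ D hA hS, fromBlocks_mulVec,
    sumElim_dotProduct_sumElim]
  simp only [neg_mulVec, mulVec_add, mulVec_neg, dotProduct_add, add_dotProduct,
    dotProduct_neg, neg_dotProduct, add_mulVec, Sum.elim_comp_inl, Sum.elim_comp_inr,
    mulVec_mulVec, hmove, Matrix.mul_assoc]
  ring

variable [Fintype ι] [DecidableEq ι]

lemma inv_reindex_fromBlocks_apply_inr_inr {C : Matrix p m R} (e : m ⊕ p ≃ ι)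
    (hA : IsUnit A.det) (hS : IsUnit (D - C * A⁻¹ * B).det) (a b : p) :
    (reindex e e (fromBlocks A B C D))⁻¹ (e (Sum.inr a)) (e (Sum.inr b)) =
      (D - C * A⁻¹ * B)⁻¹ a b := by
  rw [inv_reindex, reindex_apply, submatrix_apply, Equiv.symm_apply_apply,
    Equiv.symm_apply_apply, inv_fromBlocks_of_isUnit_det_schur A B C D hA hS, fromBlocks_apply₂₂]

lemma dotProduct_inv_reindex_fromBlocks_mulVec (e : m ⊕ p ≃ ι) (hAsymm : A.IsSymm)
    (hA : IsUnit A.det) (hS : IsUnit (D - Bᵀ * A⁻¹ * B).det) {v w : ι → R} {x₁ x₂ : m → R}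
    {y₁ y₂ : p → R} (hv : v ∘ e = Sum.elim x₁ y₁) (hw : w ∘ e = Sum.elim x₂ y₂) :
    v ⬝ᵥ ((reindex e e (fromBlocks A B Bᵀ D))⁻¹ *ᵥ w) =
      x₁ ⬝ᵥ (A⁻¹ *ᵥ x₂) +
        (-(Bᵀ * A⁻¹) *ᵥ x₁ + y₁) ⬝ᵥ ((D - Bᵀ * A⁻¹ * B)⁻¹ *ᵥ (-(Bᵀ * A⁻¹) *ᵥ x₂ + y₂)) := by
  rw [inv_reindex, dotProduct_reindex_mulVec, hv, hw,
    sumElim_dotProduct_inv_fromBlocks_mulVec_sumElim hAsymm hA hS]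

end Schur

end Matrix

theorem stmt3 {n : ℕ}
    (H11 : Matrix (Fin n) (Fin n) ℝ) (hH11symm : H11.IsSymm) (hH11pd : H11.PosDef)
    (hH11off : ∀ i j : Fin n, i ≠ j → H11 i j ≤ 0)
    (H12 : Matrix (Fin n) (Fin 2) ℝ) (hH12 : ∀ i j, H12 i j ≤ 0)
    (H22 : Matrix (Fin 2) (Fin 2) ℝ) (H22bar : ℝ)
    -- H = [[H¹¹, H¹²],[(H¹²)ᵀ, H²²]], H̄ = [[H¹¹, H̄¹²],[(H̄¹²)ᵀ, H̄²²]]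
    (H : Matrix (Fin (n + 2)) (Fin (n + 2)) ℝ)
    (Hbar : Matrix (Fin (n + 1)) (Fin (n + 1)) ℝ)
    (hH : H = Matrix.reindex finSumFinEquiv finSumFinEquiv
      (Matrix.fromBlocks H11 H12 H12ᵀ H22))
    (hHbar : Hbar = Matrix.reindex finSumFinEquiv finSumFinEquiv
      (Matrix.fromBlocks H11 (Matrix.of fun i (_ : Fin 1) => H12 i 0 + H12 i 1)
        (Matrix.of fun (_ : Fin 1) j => H12 j 0 + H12 j 1) (Matrix.of fun _ _ => H22bar)))
    (hHpd : H.PosDef)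
    (hHbarpd : Hbar.PosDef)
    (X1 X2 : Fin (n + 2) → ℝ) (hX1 : ∀ i, 0 ≤ X1 i) (hX2 : ∀ i, 0 ≤ X2 i) :
    -- abbreviations
    (let G := H⁻¹
     let Gbar := Hbar⁻¹
     let M : Matrix (Fin 2) (Fin n) ℝ := -(H12ᵀ * H11⁻¹)
     let fst : (Fin (n + 2) → ℝ) → Fin n → ℝ :=
       fun X k => X (finSumFinEquiv (Sum.inl k))
     let snd : (Fin (n + 2) → ℝ) → Fin 2 → ℝ :=
       fun X a => X (finSumFinEquiv (Sum.inr a))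
     let α : (Fin (n + 2) → ℝ) → Fin 2 → ℝ := fun X => M *ᵥ fst X + snd X
     let barVec : (Fin (n + 2) → ℝ) → Fin (n + 1) → ℝ := fun X i =>
       if hi : (i : ℕ) < n then X ⟨i, by omega⟩
       else X ⟨n, by omega⟩ + X ⟨n + 1, by omega⟩
     let G22 : Matrix (Fin 2) (Fin 2) ℝ :=
       fun a b => G (finSumFinEquiv (Sum.inr a)) (finSumFinEquiv (Sum.inr b))
     let Gbar22 : ℝ := Gbar (Fin.last n) (Fin.last n)
     let C : ℝ := fst X1 ⬝ᵥ (H11⁻¹ *ᵥ fst X2)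
     (∀ a : Fin 2, 0 ≤ α X1 a) ∧ (∀ a : Fin 2, 0 ≤ α X2 a) ∧ 0 ≤ C ∧
     X1 ⬝ᵥ (G *ᵥ X2) = C + α X1 ⬝ᵥ (G22 *ᵥ α X2) ∧
     barVec X1 ⬝ᵥ (Gbar *ᵥ barVec X2) =
       C + (α X1 0 + α X1 1) * Gbar22 * (α X2 0 + α X2 1)) := by
  intro G Gbar M fst snd α barVec G22 Gbar22 C
  have hA : IsUnit H11.det := hH11pd.det_pos.ne'.isUnit
  have hH11inv : ∀ i j, 0 ≤ H11⁻¹ i j := hH11pd.inv_apply_nonneg hH11off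
  have hα : ∀ X : Fin (n + 2) → ℝ, (∀ i, 0 ≤ X i) → 0 ≤ α X := fun X hX =>
    neg_transpose_mul_mulVec_add_nonneg hH12 hH11inv (fun _ => hX _) (fun _ => hX _)
  refine ⟨hα X1 hX1, hα X2 hX2, dotProduct_nonneg_of_nonneg (fun _ => hX1 _)
    fun k => dotProduct_nonneg_of_nonneg (hH11inv k) fun _ => hX2 _, ?_, ?_⟩
  · have hS := isUnit_det_schur_of_isUnit_det_fromBlocks hA <| by
      simpa [hH, det_reindex_self] using hHpd.det_pos.ne'.isUnit
    subst hH
    have hG22 : G22 = (H22 - H12ᵀ * H11⁻¹ * H12)⁻¹ := by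
      ext a b; exact inv_reindex_fromBlocks_apply_inr_inr _ hA hS a b
    rw [hG22]
    exact dotProduct_inv_reindex_fromBlocks_mulVec _ hH11symm hA hS
      (Sum.elim_comp_inl_inr _).symm (Sum.elim_comp_inl_inr _).symm
  · set Bbar : Matrix (Fin n) (Fin 1) ℝ := of fun i _ => H12 i 0 + H12 i 1
    replace hHbar : Hbar = reindex finSumFinEquiv finSumFinEquiv
        (fromBlocks H11 Bbar Bbarᵀ (of fun _ _ => H22bar)) := hHbar
    have hS := isUnit_det_schur_of_isUnit_det_fromBlocks hA <| by
      simpa [hHbar, det_reindex_self] using hHbarpd.det_pos.ne'.isUnit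
    subst hHbar
    have hbar : ∀ X, barVec X ∘ finSumFinEquiv = Sum.elim (fst X) fun _ => snd X 0 + snd X 1 :=
      fun X => funext fun
        | .inl k => dif_pos k.isLt
        | .inr a => dif_neg (Nat.le_add_right n a).not_gt
    rw [show Gbar22 = _ from inv_reindex_fromBlocks_apply_inr_inr _ hA hS 0 0]
    refine (dotProduct_inv_reindex_fromBlocks_mulVec _ hH11symm hA hS
      (hbar X1) (hbar X2)).trans ?_
    rw [neg_transpose_mul_mulVec_add_sum_cols, neg_transpose_mul_mulVec_add_sum_cols,
      const_dotProduct_mulVec_const]
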